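/- If P(θ) = Tr(e^{iθZ} ρ e^{-iθZ} E) where Z = diag(3/2, 1/2, -1/2, -3/2), ρ is a 4×4 density matrix, and E is a 4×4 matrix with 0 ≤ E ≤ 1, then writing P(θ) = c_0 + Σ_{j=1}^{3}(c_j cos(jθ) + s_j sin(jθ)), we have c_2 + s_3 ≤ 1/√3. -/

import Mathlib

open Matrix Real Complex
open scoped ComplexOrder

/-- The diagonal entries `(3/2, 1/2, -1/2, -3/2)` of the spin-3/2 generator `Z`. -/
noncomputable def Zdiag : Fin 4 → ℝ := ![3 / 2, 1 / 2, -1 / 2, -3 / 2]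

/-!
Since `Zdiag j - Zdiag l = l - j`, the term `ρ j l * E l j` of the expanded trace oscillates at
frequency `l - j`, so `c₂ + s₃ = Re Tr(ρ W)` for an explicit matrix `W` supported on the entries
`(0,2)`, `(1,3)`, `(0,3)` of `E` and their transposes, and it suffices that
`Re ⟪x, W x⟫ ≤ ‖x‖² / √3`. From `E² ≤ E`, every row of `E` has off-diagonal mass
`∑_{k ≠ j} |E j k|² ≤ 1/4`. This reduces the bound to the operator norm of `[[A, B], [0, D]]` with
`A = 2|E 0 2|`, `B = 2|E 0 3|`, `D = 2|E 3 1|`, which is at most `2/√3` because `A² + B² ≤ 1` and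
`B² + D² ≤ 1`.
-/

theorem re_trace_mul_le_of_re_dotProduct_le {n 𝕜 : Type*} [Fintype n] [RCLike 𝕜]
    {ρ M : Matrix n n 𝕜} (hρ : ρ.PosSemidef) {c : ℝ}
    (hM : ∀ x : n → 𝕜, RCLike.re (star x ⬝ᵥ M *ᵥ x) ≤ c * RCLike.re (star x ⬝ᵥ x)) :
    RCLike.re (ρ * M).trace ≤ c * RCLike.re ρ.trace := by
  obtain ⟨m, v, rfl⟩ := posSemidef_iff_eq_sum_vecMulVec.mp hρ
  simp only [Finset.sum_mul, trace_sum, vecMulVec_mul, trace_vecMulVec, map_sum, Finset.mul_sum]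
  refine Finset.sum_le_sum fun i _ => ?_
  rw [dotProduct_comm, ← dotProduct_mulVec, dotProduct_comm (v i)]
  exact hM (v i)

section Effect

variable {n 𝕜 : Type*} [Fintype n] [DecidableEq n] [RCLike 𝕜] {E : Matrix n n 𝕜}

open scoped MatrixOrder in
theorem Matrix.PosSemidef.sub_mul_self (hE : E.PosSemidef) (hE1 : (1 - E).PosSemidef) :
    (E - E * E).PosSemidef := by
  have hE0 : 0 ≤ E := hE.nonneg
  set S := CFC.sqrt E
  have hS : S * S = E := CFC.sqrt_mul_sqrt_self E
  have hSh : Sᴴ = S := (CFC.sqrt_nonneg E).isSelfAdjoint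
  have h := hE1.conjTranspose_mul_mul_same S
  rw [hSh] at h
  convert h using 1
  rw [mul_sub, sub_mul, mul_one, hS, ← hS]
  noncomm_ring

theorem Matrix.PosSemidef.sum_norm_sq_row_le (hE : E.PosSemidef) (hE1 : (1 - E).PosSemidef)
    (j : n) : ∑ k, ‖E j k‖ ^ 2 ≤ RCLike.re (E j j) := by
  have h := (hE.sub_mul_self hE1).diag_nonneg (i := j)
  rw [sub_apply, mul_apply] at h
  have hk : ∀ k, E j k * E k j = ((‖E j k‖ ^ 2 : ℝ) : 𝕜) := fun k => by
    rw [← hE.isHermitian.apply k j, RCLike.star_def, RCLike.mul_conj, RCLike.ofReal_pow]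
  simp only [hk, ← RCLike.ofReal_sum] at h
  simpa using RCLike.re_le_re h

theorem Matrix.PosSemidef.norm_sq_add_norm_sq_le (hE : E.PosSemidef) (hE1 : (1 - E).PosSemidef)
    {j k l : n} (hjk : j ≠ k) (hjl : j ≠ l) (hkl : k ≠ l) :
    ‖E j k‖ ^ 2 + ‖E j l‖ ^ 2 ≤ 1 / 4 := by
  have hrow := hE.sum_norm_sq_row_le hE1 j
  have hsub : ‖E j j‖ ^ 2 + ‖E j k‖ ^ 2 + ‖E j l‖ ^ 2 ≤ ∑ i, ‖E j i‖ ^ 2 := by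
    have h := Finset.sum_le_sum_of_subset_of_nonneg (Finset.subset_univ {j, k, l})
      (fun i _ _ => sq_nonneg ‖E j i‖)
    rwa [Finset.sum_insert (by simp [hjk, hjl]), Finset.sum_pair hkl, ← add_assoc] at h
  have hdiag : RCLike.re (E j j) ^ 2 ≤ ‖E j j‖ ^ 2 := by
    rw [← sq_abs]
    exact pow_le_pow_left₀ (abs_nonneg _) (RCLike.abs_re_le_norm _) 2
  nlinarith [sq_nonneg (RCLike.re (E j j) - 1 / 2)]

end Effect

theorem le_one_div_sqrt_three_mul_of_three_mul_sq_le {T S : ℝ} (hS : 0 ≤ S)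
    (h : 3 * T ^ 2 ≤ S ^ 2) : T ≤ 1 / √3 * S := by
  rw [one_div_mul_eq_div, le_div_iff₀ (by positivity)]
  refine (abs_le_of_sq_le_sq' ?_ hS).2
  rwa [mul_pow, Real.sq_sqrt (by norm_num), mul_comm]

theorem bilinear_le_of_sq_add_sq_le_one {A B D p q u w : ℝ}
    (h₁ : A ^ 2 + B ^ 2 ≤ 1) (h₂ : B ^ 2 + D ^ 2 ≤ 1) :
    A * p * u + B * p * w + D * q * w ≤ 1 / √3 * (p ^ 2 + q ^ 2 + u ^ 2 + w ^ 2) := by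
  refine le_one_div_sqrt_three_mul_of_three_mul_sq_le (by positivity) ?_
  -- `hnorm` says that `[[A, B], [0, D]]` has operator norm at most `2/√3`; `hdet` is the
  -- determinant of `4/3 - Mᵀ M`, scaled by `9`.
  have hdet : 0 ≤ (4 - 3 * A ^ 2) * (4 - 3 * B ^ 2 - 3 * D ^ 2) - 9 * A ^ 2 * B ^ 2 := by
    nlinarith [sq_nonneg (3 * A ^ 2 - 2), sq_nonneg A, sq_nonneg B]
  have hnorm : (A * u + B * w) ^ 2 + D ^ 2 * w ^ 2 ≤ 4 / 3 * (u ^ 2 + w ^ 2) := by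
    nlinarith [sq_nonneg ((4 - 3 * A ^ 2) * u - 3 * A * B * w), mul_nonneg (sq_nonneg w) hdet,
      sq_nonneg A, sq_nonneg (A * u + B * w)]
  have hcs : (A * p * u + B * p * w + D * q * w) ^ 2
      ≤ (p ^ 2 + q ^ 2) * ((A * u + B * w) ^ 2 + D ^ 2 * w ^ 2) := by
    nlinarith [sq_nonneg (p * D * w - q * (A * u + B * w))]
  nlinarith [sq_nonneg (p ^ 2 + q ^ 2 - u ^ 2 - w ^ 2),
    mul_le_mul_of_nonneg_left hnorm (add_nonneg (sq_nonneg p) (sq_nonneg q))]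

noncomputable def trigPoly3 (a₀ a₁ b₁ a₂ b₂ a₃ b₃ θ : ℝ) : ℝ :=
  a₀ + a₁ * Real.cos θ + b₁ * Real.sin θ + a₂ * Real.cos (2 * θ)
    + b₂ * Real.sin (2 * θ) + a₃ * Real.cos (3 * θ) + b₃ * Real.sin (3 * θ)

theorem trigPoly3_coeff_eq {a₀ a₁ b₁ a₂ b₂ a₃ b₃ a₀' a₁' b₁' a₂' b₂' a₃' b₃' : ℝ}
    (h : ∀ θ, trigPoly3 a₀ a₁ b₁ a₂ b₂ a₃ b₃ θ = trigPoly3 a₀' a₁' b₁' a₂' b₂' a₃' b₃' θ) :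
    a₂ = a₂' ∧ b₃ = b₃' := by
  have h0 := h 0
  have h1 := h π
  have h2 := h (π / 2)
  have h3 := h (-(π / 2))
  have h4 := h (π / 6)
  have h5 := h (π - π / 6)
  simp only [trigPoly3] at h0 h1 h2 h3 h4 h5
  have c3 : Real.cos (3 * π) = -1 := by rw [show 3 * π = π + 2 * π by ring]; simp
  have s3 : Real.sin (3 * π) = 0 := by rw [show 3 * π = π + 2 * π by ring]; simp
  have c32 : Real.cos (3 * (π / 2)) = 0 := by
    rw [show 3 * (π / 2) = π / 2 + π by ring, Real.cos_add_pi, Real.cos_pi_div_two, neg_zero]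
  have s32 : Real.sin (3 * (π / 2)) = -1 := by
    rw [show 3 * (π / 2) = π / 2 + π by ring, Real.sin_add_pi, Real.sin_pi_div_two]
  norm_num [c3, s3, c32, s32, show 2 * (π / 2) = π by ring, show 2 * (π / 6) = π / 3 by ring,
    show 3 * (π / 6) = π / 2 by ring, Real.cos_pi_sub, Real.sin_pi_sub,
    show 2 * (π - π / 6) = -(π / 3) + 2 * π by ring,
    show 3 * (π - π / 6) = π / 2 + 2 * π by ring] at h0 h1 h2 h3 h4 h5
  constructor <;> linarith

theorem re_trace_diagonal_conj_mul {n : Type*} [Fintype n] [DecidableEq n] (z : n → ℝ)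
    (ρ E : Matrix n n ℂ) (θ : ℝ) :
    (diagonal (fun j => cexp (I * (z j : ℂ) * θ)) * ρ *
        diagonal (fun j => cexp (-(I * (z j : ℂ) * θ))) * E).trace.re
      = ∑ j, ∑ l, ((ρ j l * E l j).re * Real.cos ((z j - z l) * θ)
          - (ρ j l * E l j).im * Real.sin ((z j - z l) * θ)) := by
  have hphase : ∀ j l, cexp (I * (z j : ℂ) * θ) * cexp (-(I * (z l : ℂ) * θ))
      = cexp (((z j - z l) * θ : ℝ) * I) := fun j l => by
    rw [← Complex.exp_add]; push_cast; ring_nf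
  simp only [trace, diag, mul_apply, diagonal_apply, ite_mul, mul_ite, zero_mul, mul_zero,
    Finset.sum_ite_eq, Finset.sum_ite_eq', Finset.mem_univ, if_true, re_sum]
  refine Finset.sum_congr rfl fun j _ => Finset.sum_congr rfl fun l _ => ?_
  rw [show cexp (I * (z j : ℂ) * θ) * ρ j l * cexp (-(I * (z l : ℂ) * θ)) * E l j
      = ρ j l * E l j * cexp (((z j - z l) * θ : ℝ) * I) by rw [← hphase]; ring,
    mul_re, exp_ofReal_mul_I_re, exp_ofReal_mul_I_im]

theorem re_trace_spin32_conj_mul_eq_trigPoly3 (ρ E : Matrix (Fin 4) (Fin 4) ℂ) :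
    ∃ a₀ a₁ b₁ b₂ a₃ : ℝ, ∀ θ : ℝ,
      (diagonal (fun j => cexp (I * (Zdiag j : ℂ) * θ)) * ρ *
          diagonal (fun j => cexp (-(I * (Zdiag j : ℂ) * θ))) * E).trace.re
        = trigPoly3 a₀ a₁ b₁ (ρ 0 2 * E 2 0 + ρ 1 3 * E 3 1 + ρ 2 0 * E 0 2 + ρ 3 1 * E 1 3).re
            b₂ a₃ (ρ 3 0 * E 0 3 - ρ 0 3 * E 3 0).im θ := by
  refine ⟨(ρ 0 0 * E 0 0 + ρ 1 1 * E 1 1 + ρ 2 2 * E 2 2 + ρ 3 3 * E 3 3).re,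
    (ρ 0 1 * E 1 0 + ρ 1 2 * E 2 1 + ρ 2 3 * E 3 2 + ρ 1 0 * E 0 1 + ρ 2 1 * E 1 2
      + ρ 3 2 * E 2 3).re,
    (ρ 1 0 * E 0 1 + ρ 2 1 * E 1 2 + ρ 3 2 * E 2 3 - ρ 0 1 * E 1 0 - ρ 1 2 * E 2 1
      - ρ 2 3 * E 3 2).im,
    (ρ 2 0 * E 0 2 + ρ 3 1 * E 1 3 - ρ 0 2 * E 2 0 - ρ 1 3 * E 3 1).im,
    (ρ 0 3 * E 3 0 + ρ 3 0 * E 0 3).re, fun θ => ?_⟩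
  rw [re_trace_diagonal_conj_mul]
  simp only [Fin.sum_univ_four, Zdiag, trigPoly3, cons_val_zero, cons_val_one, cons_val_two,
    cons_val_three, add_re, add_im, sub_im]
  norm_num [-mul_re, -mul_im]
  ring

noncomputable def spin32Witness (E : Matrix (Fin 4) (Fin 4) ℂ) : Matrix (Fin 4) (Fin 4) ℂ :=
  !![0, 0, E 0 2, -I * E 0 3; 0, 0, 0, E 1 3; E 2 0, 0, 0, 0; I * E 3 0, E 3 1, 0, 0]

theorem re_trace_mul_spin32Witness (ρ E : Matrix (Fin 4) (Fin 4) ℂ) :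
    (ρ * spin32Witness E).trace.re
      = (ρ 0 2 * E 2 0 + ρ 1 3 * E 3 1 + ρ 2 0 * E 0 2 + ρ 3 1 * E 1 3).re
        + (ρ 3 0 * E 0 3 - ρ 0 3 * E 3 0).im := by
  simp [spin32Witness, trace, mul_apply, Fin.sum_univ_four]
  ring

theorem re_star_dotProduct_spin32Witness_le (E : Matrix (Fin 4) (Fin 4) ℂ) (x : Fin 4 → ℂ) :
    (star x ⬝ᵥ spin32Witness E *ᵥ x).re
      ≤ ‖x 0‖ * ‖x 2‖ * (‖E 0 2‖ + ‖E 2 0‖) + ‖x 0‖ * ‖x 3‖ * (‖E 0 3‖ + ‖E 3 0‖)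
        + ‖x 1‖ * ‖x 3‖ * (‖E 1 3‖ + ‖E 3 1‖) := by
  have hterm : ∀ a b c : ℂ, (star a * b * c).re ≤ ‖a‖ * ‖c‖ * ‖b‖ := fun a b c =>
    (re_le_norm _).trans_eq (by simp only [norm_mul, norm_star]; ring)
  have hq : star x ⬝ᵥ spin32Witness E *ᵥ x
      = star (x 0) * E 0 2 * x 2 + star (x 2) * E 2 0 * x 0
        + (star (x 0) * (-I * E 0 3) * x 3 + star (x 3) * (I * E 3 0) * x 0)
        + (star (x 1) * E 1 3 * x 3 + star (x 3) * E 3 1 * x 1) := by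
    simp [spin32Witness, dotProduct, mulVec, Fin.sum_univ_four]
    ring
  have h03 := hterm (x 0) (-I * E 0 3) (x 3)
  have h30 := hterm (x 3) (I * E 3 0) (x 0)
  simp only [norm_mul, norm_neg, norm_I, one_mul] at h03 h30
  rw [hq]
  simp only [add_re]
  linarith [hterm (x 0) (E 0 2) (x 2), hterm (x 2) (E 2 0) (x 0), hterm (x 1) (E 1 3) (x 3),
    hterm (x 3) (E 3 1) (x 1)]

theorem re_star_dotProduct_self_fin_four (x : Fin 4 → ℂ) :
    (star x ⬝ᵥ x).re = ‖x 0‖ ^ 2 + ‖x 1‖ ^ 2 + ‖x 2‖ ^ 2 + ‖x 3‖ ^ 2 := by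
  simp [dotProduct, Fin.sum_univ_four, conj_mul', ← ofReal_pow]

theorem re_star_dotProduct_spin32Witness_le_of_posSemidef {E : Matrix (Fin 4) (Fin 4) ℂ}
    (hE : E.PosSemidef) (hE1 : (1 - E).PosSemidef) (x : Fin 4 → ℂ) :
    (star x ⬝ᵥ spin32Witness E *ᵥ x).re ≤ 1 / √3 * (star x ⬝ᵥ x).re := by
  have hnorm : ∀ j k, ‖E k j‖ = ‖E j k‖ := fun j k => by
    rw [← hE.isHermitian.apply j k, norm_star]
  have hrow₀ := hE.norm_sq_add_norm_sq_le hE1 (j := 0) (k := 2) (l := 3) (by decide) (by decide)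
    (by decide)
  have hrow₃ := hE.norm_sq_add_norm_sq_le hE1 (j := 3) (k := 0) (l := 1) (by decide) (by decide)
    (by decide)
  have key := bilinear_le_of_sq_add_sq_le_one (A := 2 * ‖E 0 2‖) (B := 2 * ‖E 3 0‖)
    (D := 2 * ‖E 3 1‖) (p := ‖x 0‖) (q := ‖x 1‖) (u := ‖x 2‖) (w := ‖x 3‖)
    (by rw [← hnorm 0 3] at hrow₀; nlinarith) (by nlinarith)
  rw [re_star_dotProduct_self_fin_four]
  refine (re_star_dotProduct_spin32Witness_le E x).trans ?_
  rw [hnorm 0 2, ← hnorm 0 3, ← hnorm 1 3]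
  linarith

/-- Tsirelson-type inequality for spin 3/2: if
`P(θ) = Tr(e^{iθZ} ρ e^{-iθZ} E)` with `Z = diag(3/2, 1/2, -1/2, -3/2)`, `ρ` a density
matrix and `0 ≤ E ≤ 1`, and `P(θ) = c₀ + Σ_{j=1}^3 (c_j cos(jθ) + s_j sin(jθ))`,
then `c₂ + s₃ ≤ 1/√3`. -/
theorem stmt16 (ρ E : Matrix (Fin 4) (Fin 4) ℂ)
    (hρ : ρ.PosSemidef) (hTr : ρ.trace = 1)
    (hE : E.PosSemidef) (hE1 : ((1 : Matrix (Fin 4) (Fin 4) ℂ) - E).PosSemidef)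
    (c₀ c₁ c₂ c₃ s₁ s₂ s₃ : ℝ)
    (hP : ∀ θ : ℝ,
      ((Matrix.diagonal (fun j => Complex.exp (Complex.I * (Zdiag j : ℂ) * (θ : ℂ))) * ρ *
          Matrix.diagonal (fun j => Complex.exp (-(Complex.I * (Zdiag j : ℂ) * (θ : ℂ)))) *
          E).trace).re
        = c₀ + c₁ * Real.cos θ + s₁ * Real.sin θ + c₂ * Real.cos (2 * θ)
          + s₂ * Real.sin (2 * θ) + c₃ * Real.cos (3 * θ) + s₃ * Real.sin (3 * θ)) :
    c₂ + s₃ ≤ 1 / Real.sqrt 3 := by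
  obtain ⟨a₀, a₁, b₁, b₂, a₃, hexp⟩ := re_trace_spin32_conj_mul_eq_trigPoly3 ρ E
  obtain ⟨hc₂, hs₃⟩ := trigPoly3_coeff_eq fun θ => (hP θ).symm.trans (hexp θ)
  calc c₂ + s₃ = (ρ * spin32Witness E).trace.re := by rw [hc₂, hs₃, re_trace_mul_spin32Witness]
    _ ≤ 1 / √3 * ρ.trace.re :=
      re_trace_mul_le_of_re_dotProduct_le hρ
        (re_star_dotProduct_spin32Witness_le_of_posSemidef hE hE1)
    _ = 1 / √3 := by rw [hTr, one_re, mul_one]
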